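/- arXiv:math/0409404 — 4 statements merged into one kernel-verified Lean document; each statement's English description precedes it below -/
import Mathlib

section
/- Let f ∈ m² be reduced, let I be a zero-dimensional ideal with I^{ea}(f) ⊆ I ⊆ m, and let 0 ≤ α < β ≤ 1 be rational numbers. Then γ_α(f;I) < γ_β(f;I). -/
/-!
Both maxima are over finitely many numbers, since every candidate `λ_α(f;I,g)` only depends on
`i(f,g) ≤ 2·dim_ℂ(R/I)`. So it suffices to beat each candidate for `α` by one for `β`.
The constant term grows strictly in `α` because `dim_ℂ(R/I) ≥ 1` for `I ⊆ m`.
For a candidate `λ_α(f;I,g)`, either `i(f,g) ≤ dim_ℂ(R/I)`, and then it is `≤ 0` (at equality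
through the convention `x / 0 = 0`), or
`i(f,g) > dim_ℂ(R/I)`, and then `λ_α(f;I,g) = (dim + α·(i − dim))² / (i − dim)` is strictly
increasing in `α ≥ 0`.
-/

open MvPowerSeries

noncomputable section

/-- `R = ℂ⟦x,y⟧`, the ring of formal power series in two variables over `ℂ`. -/
abbrev R2 : Type := MvPowerSeries (Fin 2) ℂ

/-- The maximal ideal `m = ⟨x, y⟩` of `ℂ⟦x,y⟧`. -/
def mm : Ideal R2 := Ideal.span {X 0, X 1}

/-- `dim_ℂ R/I` as an extended natural number. -/
def edim (I : Ideal R2) : ℕ∞ := Cardinal.toENat (Module.rank ℂ (R2 ⧸ I))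

/-- `dim_ℂ R/I` as a natural number (junk value `0` when infinite). -/
def fdim (I : Ideal R2) : ℕ := (edim I).toNat

/-- The formal partial derivative of a power series with respect to the `i`-th variable. -/
def pd (i : Fin 2) (f : R2) : R2 :=
  fun d => ((d i : ℂ) + 1) * coeff (d + Finsupp.single i 1) f

/-- The Tjurina ideal `I^{ea}(f) = ⟨∂f/∂x, ∂f/∂y, f⟩`. -/
def Tjurina (f : R2) : Ideal R2 := Ideal.span {pd 0 f, pd 1 f, f}

/-- The intersection multiplicity `i(f,g) = dim_ℂ R/⟨f,g⟩ ∈ ℕ ∪ {∞}`. -/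
def interNum (f g : R2) : ℕ∞ := edim (Ideal.span {f, g})

/-- `λ_α(f;I,g) = (α·i(f,g) + (1−α)·dim_ℂ(R/I))² / (i(f,g) − dim_ℂ(R/I))`. -/
def lam (α : ℚ) (f : R2) (I : Ideal R2) (g : R2) : ℝ :=
  ((α : ℝ) * ((interNum f g).toNat : ℝ) + (1 - (α : ℝ)) * (fdim I : ℝ)) ^ 2 /
    (((interNum f g).toNat : ℝ) - (fdim I : ℝ))

/-- `γ_α(f;I) = max({(1+α)²·dim_ℂ(R/I)} ∪ {λ_α(f;I,g) : g ∈ I, i(f,g) ≤ 2·dim_ℂ(R/I)})`. -/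
def gam (α : ℚ) (f : R2) (I : Ideal R2) : ℝ :=
  sSup ({(1 + (α : ℝ)) ^ 2 * (fdim I : ℝ)} ∪
    {x : ℝ | ∃ g ∈ I, interNum f g ≤ 2 * edim I ∧ x = lam α f I g})

/-- A complete intersection ideal: zero-dimensional and generated by two elements. -/
def IsCI (I : Ideal R2) : Prop := edim I < ⊤ ∧ ∃ a b : R2, I = Ideal.span {a, b}

/-- `γ_α^{ea}(f) = max({0} ∪ {γ_α(f;I) : I a complete intersection ideal,
`I^{ea}(f) ⊆ I ⊆ m`})`. -/
def gamEA (α : ℚ) (f : R2) : ℝ :=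
  sSup ({0} ∪ {x : ℝ | ∃ I : Ideal R2, IsCI I ∧ Tjurina f ≤ I ∧ I ≤ mm ∧ x = gam α f I})

lemma mm_ne_top : mm ≠ ⊤ := by
  intro h
  have h1 : (1 : R2) ∈ mm := h ▸ Submodule.mem_top
  rw [mm, Ideal.mem_span_pair] at h1
  obtain ⟨a, b, hab⟩ := h1
  have := congrArg (constantCoeff : R2 →+* ℂ) hab
  simp [constantCoeff_X] at this

lemma fdim_pos {I : Ideal R2} (hI : I ≠ ⊤) (hI0 : edim I < ⊤) : 0 < fdim I := by
  have : Nontrivial (R2 ⧸ I) := Ideal.Quotient.nontrivial_iff.mpr hI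
  refine ENat.toNat_pos ?_ hI0.ne
  rw [edim, Ne, Cardinal.toENat_eq_zero]
  exact (rank_pos (R := ℂ) (M := R2 ⧸ I)).ne'

section LamFun

def lamFun (α i d : ℝ) : ℝ := (α * i + (1 - α) * d) ^ 2 / (i - d)

lemma lam_eq_lamFun (α : ℚ) (f : R2) (I : Ideal R2) (g : R2) :
    lam α f I g = lamFun α ((interNum f g).toNat) (fdim I) := rfl

variable {α β i d : ℝ}

lemma lamFun_nonpos (h : i ≤ d) : lamFun α i d ≤ 0 :=
  div_nonpos_of_nonneg_of_nonpos (sq_nonneg _) (sub_nonpos.mpr h)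

lemma lamFun_lt_lamFun (hα : 0 ≤ α) (hαβ : α < β) (hd : 0 ≤ d) (hdi : d < i) :
    lamFun α i d < lamFun β i d := by
  have hnum : α * i + (1 - α) * d < β * i + (1 - β) * d := by nlinarith
  have hnum0 : 0 ≤ α * i + (1 - α) * d := by nlinarith
  exact div_lt_div_of_pos_right (pow_lt_pow_left₀ hnum hnum0 two_ne_zero) (sub_pos.mpr hdi)

end LamFun

section Candidates

def gamCandidates (α : ℚ) (f : R2) (I : Ideal R2) : Set ℝ :=
  {(1 + (α : ℝ)) ^ 2 * (fdim I : ℝ)} ∪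
    {x : ℝ | ∃ g ∈ I, interNum f g ≤ 2 * edim I ∧ x = lam α f I g}

variable {f : R2} {I : Ideal R2}

lemma gamCandidates_finite (hI0 : edim I < ⊤) (α : ℚ) : (gamCandidates α f I).Finite := by
  have hedim : edim I = (fdim I : ℕ∞) := (ENat.natCast_toNat hI0.ne).symm
  refine (((Set.finite_Iic (2 * fdim I)).image
    (fun i : ℕ => lamFun α i (fdim I))).insert ((1 + (α : ℝ)) ^ 2 * fdim I)).subset ?_
  rintro x (hx | ⟨g, -, hcond, rfl⟩)
  · exact Or.inl hx
  · refine Or.inr ⟨(interNum f g).toNat, ENat.toNat_le_of_le_natCast ?_, rfl⟩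
    rw [hedim] at hcond
    exact_mod_cast hcond

lemma le_gam (hI0 : edim I < ⊤) {β : ℚ} {x : ℝ} (hx : x ∈ gamCandidates β f I) :
    x ≤ gam β f I :=
  le_csSup (gamCandidates_finite hI0 β).bddAbove hx

lemma gam_lt_iff (hI0 : edim I < ⊤) {α : ℚ} {a : ℝ} :
    gam α f I < a ↔ ∀ x ∈ gamCandidates α f I, x < a :=
  (gamCandidates_finite hI0 α).csSup_lt_iff ⟨_, Or.inl rfl⟩

end Candidates

theorem stmt1_general (f : R2)
    (I : Ideal R2) (hI0 : edim I < ⊤) (hIm : I ≤ mm)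
    (α β : ℚ) (hα : 0 ≤ α) (hαβ : α < β) :
    gam α f I < gam β f I := by
  have hd : (0 : ℝ) < fdim I :=
    Nat.cast_pos.mpr (fdim_pos (ne_top_of_le_ne_top mm_ne_top hIm) hI0)
  have hαR : (0 : ℝ) ≤ α := by exact_mod_cast hα
  have hαβR : (α : ℝ) < β := by exact_mod_cast hαβ
  have hconst : (1 + (α : ℝ)) ^ 2 * fdim I < gam β f I :=
    calc (1 + (α : ℝ)) ^ 2 * fdim I < (1 + (β : ℝ)) ^ 2 * fdim I := by gcongr
      _ ≤ gam β f I := le_gam hI0 (Or.inl rfl)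
  rw [gam_lt_iff hI0]
  rintro x (rfl | ⟨g, hg, hcond, rfl⟩)
  · exact hconst
  rw [lam_eq_lamFun]
  rcases le_or_gt ((interNum f g).toNat : ℝ) (fdim I) with hle | hlt
  · exact (lamFun_nonpos hle).trans_lt ((by positivity : (0 : ℝ) ≤ _).trans_lt hconst)
  · calc _ < lamFun β ((interNum f g).toNat) (fdim I) := lamFun_lt_lamFun hαR hαβR hd.le hlt
      _ ≤ gam β f I := le_gam hI0 (Or.inr ⟨g, hg, hcond, rfl⟩)

/-- For `f ∈ m²` reduced, `I` zero-dimensional with `I^{ea}(f) ⊆ I ⊆ m`,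
and rationals `0 ≤ α < β ≤ 1`, one has `γ_α(f;I) < γ_β(f;I)`. -/
theorem stmt1 (f : R2) (hf2 : f ∈ mm ^ 2) (hred : Squarefree f)
    (I : Ideal R2) (hI0 : edim I < ⊤) (hTI : Tjurina f ≤ I) (hIm : I ≤ mm)
    (α β : ℚ) (hα : 0 ≤ α) (hαβ : α < β) (hβ : β ≤ 1) :
    gam α f I < gam β f I :=
  stmt1_general f I hI0 hIm α β hα hαβ

end
end

section
/- Let k ≥ 1, let f = x² − y^{k+1} ∈ R (a representative of the A_k-singularity), and let 0 ≤ α ≤ 1 be rational. Then γ_α^{ea}(f) = (k + α)². -/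
open MvPowerSeries

noncomputable section

/-!
The Tjurina ideal of `f = x² − y^(k+1)` is `⟨x, y^k⟩`, itself a complete intersection of
colength `k` inside `m`. Every admissible `I` contains it, so `d = dim R/I ≤ k`, which bounds
`(1+α)²d` by `(k+α)²`. For `g ∈ I` with `d < i(f,g) ≤ 2d`, put `t = i(f,g) − d ∈ [1, d]`; then
`λ_α = (d + αt)²/t`, a convex function of `t` whose values at `t = 1` and `t = d` are at most
`(k+α)²`. The bound is attained at `I = ⟨x, y^k⟩` and `g = x`, where
`i(f,x) = dim R/⟨x, y^(k+1)⟩ = k + 1` and `λ_α = (k+α)²`.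
-/

lemma span_units_mul_insert_of_mem {A : Type*} [CommRing A] {u v a b c : A} (hu : IsUnit u)
    (hv : IsUnit v) (hc : c ∈ Ideal.span {a, b}) :
    Ideal.span {u * a, v * b, c} = Ideal.span {a, b} := by
  rw [Ideal.span_insert, Ideal.span_insert, Ideal.span_singleton_mul_left_unit hu,
    Ideal.span_singleton_mul_left_unit hv, ← sup_assoc, ← Ideal.span_insert, sup_eq_left]
  exact (Ideal.span_singleton_le_iff_mem _).mpr hc

lemma edim_antitone {I J : Ideal R2} (h : J ≤ I) : edim I ≤ edim J :=
  Cardinal.toENat.monotone' <|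
    LinearMap.rank_le_of_surjective (Ideal.Quotient.factorₐ ℂ h).toLinearMap
      (Ideal.Quotient.factor_surjective h)

lemma one_add_sq_mul_le {a d k : ℝ} (ha0 : 0 ≤ a) (ha1 : a ≤ 1) (hk : 1 ≤ k) (hdk : d ≤ k) :
    (1 + a) ^ 2 * d ≤ (k + a) ^ 2 := by
  nlinarith [mul_nonneg (sub_nonneg.2 hk) (by nlinarith : (0:ℝ) ≤ k - a ^ 2),
    mul_nonneg (sq_nonneg (1 + a)) (sub_nonneg.2 hdk)]

lemma add_mul_sq_le {a d t k : ℝ} (ha0 : 0 ≤ a) (ha1 : a ≤ 1) (hk : 1 ≤ k) (ht : 1 ≤ t)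
    (htd : t ≤ d) (hdk : d ≤ k) : (d + a * t) ^ 2 ≤ (k + a) ^ 2 * t := by
  have h1 : (d + a) ^ 2 ≤ (k + a) ^ 2 := by gcongr; linarith
  have hd : (1 + a) ^ 2 * d ≤ (k + a) ^ 2 := one_add_sq_mul_le ha0 ha1 hk hdk
  rcases (ht.trans htd).eq_or_lt with rfl | hd1
  · simpa [le_antisymm htd ht] using h1
  -- the claim holds at `t = 1` and `t = d`, and `(d + a t)²` lies below its chord between them:
  -- the difference is `a²(t - 1)(t - d) ≤ 0`
  refine le_of_mul_le_mul_left ?_ (sub_pos.2 hd1)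
  nlinarith [mul_nonneg (mul_nonneg (sub_nonneg.2 hd1.le) (sq_nonneg a))
      (mul_nonneg (sub_nonneg.2 ht) (sub_nonneg.2 htd)),
    mul_le_mul_of_nonneg_left h1 (sub_nonneg.2 htd),
    mul_le_mul_of_nonneg_left hd (mul_nonneg (sub_nonneg.2 ht) (by linarith : (0:ℝ) ≤ d))]

lemma lam_le_sq {α : ℚ} (hα0 : 0 ≤ α) (hα1 : α ≤ 1) {k : ℕ} (hk : 1 ≤ k) {f g : R2}
    {I : Ideal R2} (hIk : edim I ≤ k) (hg : interNum f g ≤ 2 * edim I) :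
    lam α f I g ≤ ((k : ℝ) + α) ^ 2 := by
  obtain ⟨d, hd⟩ := ENat.ne_top_iff_exists.mp (ne_top_of_le_ne_top (ENat.natCast_ne_top k) hIk)
  rw [← hd, show (2 : ℕ∞) * d = (2 * d : ℕ) by push_cast; rfl] at hg
  obtain ⟨i, hi⟩ := ENat.ne_top_iff_exists.mp (ne_top_of_le_ne_top (ENat.natCast_ne_top _) hg)
  rw [← hi, Nat.cast_le] at hg
  rw [← hd, Nat.cast_le] at hIk
  rw [lam, fdim, ← hd, ← hi, ENat.toNat_natCast, ENat.toNat_natCast]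
  rcases le_or_gt i d with hid | hdi
  · exact (div_nonpos_of_nonneg_of_nonpos (sq_nonneg _) (by simpa using hid)).trans (sq_nonneg _)
  · have hdi' : (d : ℝ) + 1 ≤ i := by exact_mod_cast hdi
    have hi2d : (i : ℝ) ≤ 2 * d := by exact_mod_cast hg
    have key := add_mul_sq_le (a := α) (d := d) (t := i - d) (k := k) (by exact_mod_cast hα0)
      (by exact_mod_cast hα1) (by exact_mod_cast hk) (by linarith) (by linarith)
      (by exact_mod_cast hIk)
    rw [div_le_iff₀ (by linarith)]
    linarith

def gamSet (α : ℚ) (f : R2) (I : Ideal R2) : Set ℝ :=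
  {(1 + (α : ℝ)) ^ 2 * (fdim I : ℝ)} ∪
    {x : ℝ | ∃ g ∈ I, interNum f g ≤ 2 * edim I ∧ x = lam α f I g}

lemma gam_eq_sSup_gamSet (α : ℚ) (f : R2) (I : Ideal R2) : gam α f I = sSup (gamSet α f I) :=
  rfl

lemma sq_mem_upperBounds_gamSet {α : ℚ} (hα0 : 0 ≤ α) (hα1 : α ≤ 1) {k : ℕ} (hk : 1 ≤ k)
    {f : R2} {I : Ideal R2} (hIk : edim I ≤ k) :
    ((k : ℝ) + α) ^ 2 ∈ upperBounds (gamSet α f I) := by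
  rintro x (rfl | ⟨g, -, hg, rfl⟩)
  · exact one_add_sq_mul_le (by exact_mod_cast hα0) (by exact_mod_cast hα1) (by exact_mod_cast hk)
      (by exact_mod_cast ENat.toNat_le_of_le_natCast hIk)
  · exact lam_le_sq hα0 hα1 hk hIk hg

lemma gam_le_sq {α : ℚ} (hα0 : 0 ≤ α) (hα1 : α ≤ 1) {k : ℕ} (hk : 1 ≤ k) {f : R2}
    {I : Ideal R2} (hIk : edim I ≤ k) : gam α f I ≤ ((k : ℝ) + α) ^ 2 := by
  rw [gam_eq_sSup_gamSet]
  exact csSup_le (Set.union_nonempty.mpr (Or.inl (Set.singleton_nonempty _)))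
    (sq_mem_upperBounds_gamSet hα0 hα1 hk hIk)

lemma lam_eq_sq_of_interNum_eq_succ {α : ℚ} {f g : R2} {I : Ideal R2} {d : ℕ} (hI : edim I = d)
    (hfg : interNum f g = d + 1) : lam α f I g = ((d : ℝ) + α) ^ 2 := by
  rw [lam, fdim, hI, hfg, ENat.toNat_natCast, ← Nat.cast_succ, ENat.toNat_natCast]
  push_cast
  ring

lemma gam_eq_sq_of_interNum_eq_succ {α : ℚ} (hα0 : 0 ≤ α) (hα1 : α ≤ 1) {f g : R2}
    {I : Ideal R2} {d : ℕ} (hd : 1 ≤ d) (hI : edim I = d) (hg : g ∈ I)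
    (hfg : interNum f g = d + 1) : gam α f I = ((d : ℝ) + α) ^ 2 := by
  have hg2 : interNum f g ≤ 2 * edim I := by
    rw [hfg, hI, two_mul]
    gcongr
    exact_mod_cast hd
  rw [gam_eq_sSup_gamSet]
  exact IsGreatest.csSup_eq
    ⟨Or.inr ⟨g, hg, hg2, (lam_eq_sq_of_interNum_eq_succ hI hfg).symm⟩,
      sq_mem_upperBounds_gamSet hα0 hα1 hd hI.le⟩

lemma gamEA_eq_sq_of_tjurina {α : ℚ} (hα0 : 0 ≤ α) (hα1 : α ≤ 1) {f g : R2} {k : ℕ}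
    (hk : 1 ≤ k) (hgen : ∃ a b : R2, Tjurina f = Ideal.span {a, b}) (hm : Tjurina f ≤ mm)
    (hdim : edim (Tjurina f) = k) (hg : g ∈ Tjurina f) (hfg : interNum f g = k + 1) :
    gamEA α f = ((k : ℝ) + α) ^ 2 := by
  refine IsGreatest.csSup_eq ⟨Or.inr ⟨Tjurina f, ⟨by simp [hdim], hgen⟩, le_rfl, hm,
    (gam_eq_sq_of_interNum_eq_succ hα0 hα1 hk hdim hg hfg).symm⟩, ?_⟩
  rintro x (rfl | ⟨I, -, hTI, -, rfl⟩)
  · exact sq_nonneg _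
  · exact gam_le_sq hα0 hα1 hk (hdim ▸ edim_antitone hTI)

open Finsupp in
lemma mem_span_X_X_pow_iff {n : ℕ} {f : R2} :
    f ∈ Ideal.span {X 0, X 1 ^ n} ↔ ∀ j < n, coeff (single 1 j) f = 0 := by
  constructor
  · rintro hf j hj
    obtain ⟨a, b, rfl⟩ := Ideal.mem_span_pair.mp hf
    rw [map_add, X_dvd_iff.mp (dvd_mul_left _ _) _ (by simp),
      X_pow_dvd_iff.mp (dvd_mul_left _ _) _ (by simpa using hj), add_zero]
  · intro hf
    let g : R2 := fun d => if d 0 = 0 then coeff d f else 0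
    have coeff_g (d) : coeff d g = if d 0 = 0 then coeff d f else 0 := rfl
    obtain ⟨p, hp⟩ : X 0 ∣ f - g := X_dvd_iff.mpr fun m hm => by
      rw [map_sub, coeff_g, if_pos hm, sub_self]
    obtain ⟨q, hq⟩ : X 1 ^ n ∣ g := X_pow_dvd_iff.mpr fun m hm => by
      rw [coeff_g]
      split_ifs with hm0
      · have hm' : m = single 1 (m 1) := by ext i; fin_cases i <;> simp [hm0]
        rw [hm']
        exact hf _ hm
      · rfl
    exact Ideal.mem_span_pair.mpr ⟨p, q, by rw [mul_comm p, mul_comm q, ← hp, ← hq]; ring⟩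

open Finsupp in
def coeffsY (n : ℕ) : R2 →ₗ[ℂ] (Fin n → ℂ) :=
  LinearMap.pi fun j => coeff (single 1 (j : ℕ))

lemma coeffsY_surjective (n : ℕ) : Function.Surjective (coeffsY n) := by
  intro v
  refine ⟨fun d => if h : d 0 = 0 ∧ d 1 < n then v ⟨d 1, h.2⟩ else 0, funext fun j => ?_⟩
  change (if h : _ then _ else _) = v j
  rw [dif_pos (by simp)]
  simp

lemma ker_coeffsY (n : ℕ) :
    LinearMap.ker (coeffsY n) = (Ideal.span {X 0, X 1 ^ n} : Ideal R2).restrictScalars ℂ := by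
  ext f
  simp [coeffsY, mem_span_X_X_pow_iff, funext_iff, Fin.forall_iff]

lemma edim_span_X_X_pow (n : ℕ) : edim (Ideal.span {X 0, X 1 ^ n}) = n := by
  let I : Ideal R2 := Ideal.span {X 0, X 1 ^ n}
  let e : (R2 ⧸ I) ≃ₗ[ℂ] (Fin n → ℂ) :=
    (Submodule.Quotient.restrictScalarsEquiv ℂ I).symm ≪≫ₗ
      Submodule.quotEquivOfEq _ _ (ker_coeffsY n).symm ≪≫ₗ
      (coeffsY n).quotKerEquivOfSurjective (coeffsY_surjective n)
  rw [edim, e.rank_eq, rank_fin_fun, Cardinal.toENat_nat]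

lemma pd_eq_pderiv (i : Fin 2) (f : R2) : pd i f = pderiv ℂ i f := by
  ext d
  rw [coeff_pderiv, mul_comm]
  rfl

lemma tjurina_X_sq_sub_X_pow (k : ℕ) :
    Tjurina (X 0 ^ 2 - X 1 ^ (k + 1)) = Ideal.span {X 0, X 1 ^ k} := by
  have hpd : pd 0 (X 0 ^ 2 - X 1 ^ (k + 1)) = 2 * X 0 ∧
      pd 1 (X 0 ^ 2 - X 1 ^ (k + 1)) = -(k + 1 : R2) * X 1 ^ k := by
    exact ⟨by simp [pd_eq_pderiv], by simp [pd_eq_pderiv]; ring⟩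
  have h2 : IsUnit (2 : R2) := by
    rw [isUnit_iff_constantCoeff, map_ofNat]
    exact two_ne_zero.isUnit
  have hk : IsUnit (-(k + 1 : R2)) := by
    rw [isUnit_iff_constantCoeff, map_neg, map_add, map_natCast, map_one]
    exact (neg_ne_zero.mpr (Nat.cast_add_one_ne_zero k)).isUnit
  rw [Tjurina, hpd.1, hpd.2,
    span_units_mul_insert_of_mem h2 hk (Ideal.mem_span_pair.mpr ⟨X 0, -X 1, by ring⟩)]

lemma span_X_X_pow_le_mm {n : ℕ} (hn : 1 ≤ n) : Ideal.span {X 0, X 1 ^ n} ≤ mm := by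
  obtain ⟨m, rfl⟩ := Nat.exists_eq_add_of_le' hn
  rw [mm, pow_succ, Ideal.span_le, Set.insert_subset_iff, Set.singleton_subset_iff]
  exact ⟨Ideal.subset_span (by simp),
    Ideal.mul_mem_left _ _ (Ideal.subset_span (by simp))⟩

lemma interNum_X_sq_sub_X_pow_X (k : ℕ) :
    interNum (X 0 ^ 2 - X 1 ^ (k + 1)) (X 0) = k + 1 := by
  rw [interNum, Ideal.span_pair_comm, sub_eq_add_neg, sq, Ideal.span_pair_left_mul_add,
    Ideal.span_pair_neg, edim_span_X_X_pow, Nat.cast_succ]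

/-- For `k ≥ 1`, `f = x² − y^{k+1}` (an `A_k`-singularity) and rational
`0 ≤ α ≤ 1`, one has `γ_α^{ea}(f) = (k + α)²`. -/
theorem stmt4 (k : ℕ) (hk : 1 ≤ k) (α : ℚ) (hα0 : 0 ≤ α) (hα1 : α ≤ 1) :
    gamEA α (X 0 ^ 2 - X 1 ^ (k + 1)) = ((k : ℝ) + α) ^ 2 := by
  have hT := tjurina_X_sq_sub_X_pow k
  refine gamEA_eq_sq_of_tjurina hα0 hα1 hk ⟨X 0, X 1 ^ k, hT⟩ (hT ▸ span_X_X_pow_le_mm hk)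
    (by rw [hT, edim_span_X_X_pow]) (hT ▸ Ideal.subset_span (by simp))
    (interNum_X_sq_sub_X_pow_X k)

end
end

section
/- Let p, q be positive integers and let f ∈ R be semi-quasihomogeneous with respect to (p,q) with ord_{(p,q)}(f) = pq (i.e. the (p,q)-leading form of f is reduced). Then for every 0 ≠ g ∈ R one has i(f,g) ≥ ord_{(p,q)}(g). -/
open MvPowerSeries

noncomputable section

/-- The monomial ideal `⟨x^β y^γ : βp + γq ≥ pq⟩`. -/
def wIdeal (p q : ℕ) : Ideal R2 :=
  Ideal.span {s : R2 | ∃ β γ : ℕ, p * q ≤ p * β + q * γ ∧ s = X 0 ^ β * X 1 ^ γ}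

/-- The equisingularity ideal `E(f) = ⟨∂f/∂x, ∂f/∂y⟩ + ⟨x^β y^γ : βp + γq ≥ pq⟩` of a
convenient semi-quasihomogeneous power series of `(p,q)`-order `pq`. -/
def Esing (p q : ℕ) (f : R2) : Ideal R2 := Ideal.span {pd 0 f, pd 1 f} ⊔ wIdeal p q

/-- `γ_α^{es}(f) = max({0} ∪ {γ_α(f;I) : I a complete intersection ideal, E(f) ⊆ I ⊆ m})`. -/
def gamES (p q : ℕ) (α : ℚ) (f : R2) : ℝ :=
  sSup ({0} ∪ {x : ℝ | ∃ I : Ideal R2, IsCI I ∧ Esing p q f ≤ I ∧ I ≤ mm ∧ x = gam α f I})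

/-- The `(p,q)`-leading form of `f`: the sum of the terms of `(p,q)`-degree `pq`. -/
def leadForm (p q : ℕ) (f : R2) : R2 :=
  fun d => if p * d 0 + q * d 1 = p * q then coeff d f else 0

/-- `f` is convenient semi-quasihomogeneous w.r.t. `(p,q)` with `ord_{(p,q)}(f) = pq`:
all terms have weighted degree at least `pq`, the `(p,q)`-leading form is reduced
(squarefree), and the coefficients of `x^q` and `y^p` are nonzero. -/
def IsConvSQH (p q : ℕ) (f : R2) : Prop :=
  (∀ d : Fin 2 →₀ ℕ, coeff d f ≠ 0 → p * q ≤ p * d 0 + q * d 1) ∧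
  Squarefree (leadForm p q f) ∧
  coeff (Finsupp.single 0 q) f ≠ 0 ∧ coeff (Finsupp.single 1 p) f ≠ 0

/-- `ord_{(p,q)}(g) = min{βp + γq : the coefficient of x^β y^γ in g is nonzero}`. -/
def wOrd (p q : ℕ) (g : R2) : ℕ :=
  sInf {n : ℕ | ∃ d : Fin 2 →₀ ℕ, coeff d g ≠ 0 ∧ n = p * d 0 + q * d 1}

/-!
Let `S(N)` be the set of exponents of `(p,q)`-weight `< N`. Truncating at weight `N = pq + n`,
where `n = ord_{(p,q)}(g)`, maps `R/⟨f,g⟩` onto `ℂ^{S(N)}` modulo the truncations of `f·R` and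
`g·R`. Since `f` has weight `≥ pq` and `g` weight `≥ n`, the truncation of `a·f` only depends on
the truncation of `a` at weight `n`, and that of `b·g` on the truncation of `b` at weight `pq`,
so `i(f,g) ≥ #S(pq + n) - #S(n) - #S(pq)`. Counting lattice points, the exponents of weight in
`[pq, pq + n)` not obtained from `S(n)` by shifting by `x^q` number at least `n`: every weight
`pq + G k` (`G = gcd(p,q)`) is attained by `G` exponents `(a, b)` with `a < q`, which gives
`G ⌈n / G⌉ ≥ n` of them.
-/

open Finsupp Module

theorem LinearMap.finrank_range_le_of_ker_le {K M N P : Type*} [Field K] [AddCommGroup M]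
    [AddCommGroup N] [AddCommGroup P] [Module K M] [Module K N] [Module K P]
    [FiniteDimensional K N] {φ : M →ₗ[K] N} {ψ : M →ₗ[K] P} (h : ker φ ≤ ker ψ) :
    finrank K (range ψ) ≤ finrank K (range φ) := by
  have : FiniteDimensional K (M ⧸ ker φ) := .equiv φ.quotKerEquivRange.symm
  calc finrank K (range ψ) = finrank K (range ((ker φ).liftQ ψ h)) := by
        rw [Submodule.range_liftQ]
    _ ≤ finrank K (M ⧸ ker φ) := finrank_range_le _
    _ = finrank K (range φ) := φ.quotKerEquivRange.finrank_eq

namespace MvPowerSeries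

open LinearMap

variable {σ K : Type*} [Field K] (w : σ → ℕ)

def weightedTrunc (N : ℕ) :
    MvPowerSeries σ K →ₗ[K] ({d : σ →₀ ℕ | weight w d < N} → K) :=
  LinearMap.pi fun d => coeff d.1

theorem weightedTrunc_surjective (N : ℕ) :
    Function.Surjective (weightedTrunc (K := K) w N) := by
  classical
  intro u
  refine ⟨fun d => if h : weight w d < N then u ⟨d, h⟩ else 0, funext fun d => ?_⟩
  exact dif_pos d.2

theorem mem_ker_weightedTrunc {N : ℕ} {f : MvPowerSeries σ K} :
    f ∈ ker (weightedTrunc w N) ↔ (N : ℕ∞) ≤ f.weightedOrder w := by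
  refine ⟨fun h => le_weightedOrder w fun d hd => congr_fun h ⟨d, by exact_mod_cast hd⟩,
    fun h => funext fun d => coeff_eq_zero_of_lt_weightedOrder w ?_⟩
  exact lt_of_lt_of_le (by exact_mod_cast d.2) h

theorem ker_weightedTrunc_le_ker_comp_mulRight {A M N : ℕ} (hN : N ≤ M + A)
    {f : MvPowerSeries σ K} (hf : (A : ℕ∞) ≤ f.weightedOrder w) :
    ker (weightedTrunc w M) ≤ ker (weightedTrunc w N ∘ₗ mulRight K f) := by
  intro a ha
  rw [mem_ker_weightedTrunc] at ha
  rw [mem_ker, comp_apply, mulRight_apply, ← mem_ker, mem_ker_weightedTrunc]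
  calc (N : ℕ∞) ≤ M + A := by exact_mod_cast hN
    _ ≤ _ := (add_le_add ha hf).trans (le_weightedOrder_mul w)

variable [Finite σ] {w}

theorem finrank_weightedTrunc (hw : ∀ i, w i ≠ 0) (N : ℕ) :
    finrank K ({d : σ →₀ ℕ | weight w d < N} → K) = {d : σ →₀ ℕ | weight w d < N}.ncard := by
  have := (finite_of_nat_weight_lt w hw N).fintype
  rw [Module.finrank_fintype_fun_eq_card, Set.ncard_eq_toFinset_card', Set.toFinset_card]

theorem finrank_range_weightedTrunc_comp_mulRight_le (hw : ∀ i, w i ≠ 0) {A M N : ℕ}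
    (hN : N ≤ M + A) {f : MvPowerSeries σ K} (hf : (A : ℕ∞) ≤ f.weightedOrder w) :
    finrank K (range (weightedTrunc w N ∘ₗ mulRight K f)) ≤
      {d : σ →₀ ℕ | weight w d < M}.ncard := by
  have := (finite_of_nat_weight_lt w hw M).to_subtype
  calc finrank K (range (weightedTrunc w N ∘ₗ mulRight K f))
      ≤ finrank K (range (weightedTrunc (K := K) w M)) :=
        finrank_range_le_of_ker_le (ker_weightedTrunc_le_ker_comp_mulRight w hN hf)
    _ ≤ finrank K ({d : σ →₀ ℕ | weight w d < M} → K) := Submodule.finrank_le _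
    _ = _ := finrank_weightedTrunc hw M

theorem ncard_weight_lt_add_le (hw : ∀ i, w i ≠ 0) {f g : MvPowerSeries σ K} {A B : ℕ}
    (hf : (A : ℕ∞) ≤ f.weightedOrder w) (hg : (B : ℕ∞) ≤ g.weightedOrder w) :
    ({d : σ →₀ ℕ | weight w d < A + B}.ncard : Cardinal) ≤
      Module.rank K (MvPowerSeries σ K ⧸ Ideal.span {f, g}) +
        ({d : σ →₀ ℕ | weight w d < A}.ncard + {d : σ →₀ ℕ | weight w d < B}.ncard : ℕ) := by
  have := (finite_of_nat_weight_lt w hw (A + B)).to_subtype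
  set π := weightedTrunc (K := K) w (A + B)
  set P := range (π ∘ₗ mulRight K g) ⊔ range (π ∘ₗ mulRight K f)
  have hP : finrank K P ≤
      {d : σ →₀ ℕ | weight w d < A}.ncard + {d : σ →₀ ℕ | weight w d < B}.ncard := by
    refine (Submodule.finrank_add_le_finrank_add_finrank _ _).trans (add_le_add ?_ ?_)
    · exact finrank_range_weightedTrunc_comp_mulRight_le hw le_rfl hg
    · exact finrank_range_weightedTrunc_comp_mulRight_le hw (by rw [add_comm]) hf
  have hker : (Ideal.span {f, g}).restrictScalars K ≤ ker (P.mkQ ∘ₗ π) := by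
    intro x hx
    obtain ⟨a, b, rfl⟩ := Ideal.mem_span_pair.mp hx
    rw [mem_ker, comp_apply, Submodule.mkQ_apply, Submodule.Quotient.mk_eq_zero, map_add]
    exact add_mem (Submodule.mem_sup_right ⟨a, rfl⟩) (Submodule.mem_sup_left ⟨b, rfl⟩)
  have hQ : Module.rank K (_ ⧸ P) ≤ Module.rank K (MvPowerSeries σ K ⧸ Ideal.span {f, g}) := by
    rw [← (Submodule.Quotient.restrictScalarsEquiv K (Ideal.span {f, g})).rank_eq]
    refine rank_le_of_surjective (((Ideal.span {f, g}).restrictScalars K).liftQ _ hker)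
      (range_eq_top.mp ?_)
    rw [Submodule.range_liftQ, range_eq_top]
    exact P.mkQ_surjective.comp (weightedTrunc_surjective w _)
  have hV := Submodule.finrank_quotient_add_finrank P
  rw [finrank_weightedTrunc hw] at hV
  calc ({d : σ →₀ ℕ | weight w d < A + B}.ncard : Cardinal)
      = finrank K (_ ⧸ P) + finrank K P := by rw [← hV]; push_cast; rfl
    _ ≤ _ := add_le_add ((finrank_eq_rank K _).trans_le hQ) (by exact_mod_cast hP)

end MvPowerSeries

theorem Nat.exists_mul_add_mul_eq_mul_add_gcd_mul {p q : ℕ} (hq : 0 < q) (k : ℕ) {j : ℕ}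
    (hj : j < p.gcd q) :
    ∃ a b : ℕ, a < q ∧ a / (q / p.gcd q) = j ∧ p * a + q * b = p * q + p.gcd q * k := by
  set G := p.gcd q
  obtain ⟨p', hp'⟩ := Nat.gcd_dvd_left p q
  obtain ⟨q', hq'⟩ := Nat.gcd_dvd_right p q
  have hG : 0 < G := Nat.gcd_pos_of_pos_right p hq
  have hq'0 : 0 < q' := Nat.pos_of_mul_pos_left (hq'.symm ▸ hq : 0 < G * q')
  set x := Nat.gcdA p q
  set y := Nat.gcdB p q
  have hB : (G : ℤ) = p * x + q * y := Nat.gcd_eq_gcd_ab p q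
  obtain ⟨a₀, ha₀⟩ : ∃ a₀ : ℕ, (a₀ : ℤ) = k * x % q' :=
    ⟨_, Int.toNat_of_nonneg (Int.emod_nonneg _ (by exact_mod_cast hq'0.ne'))⟩
  have ha₀q : a₀ < q' := by
    have := Int.emod_lt_of_pos (k * x) (by exact_mod_cast hq'0 : (0 : ℤ) < q')
    omega
  have hdiv := Int.emod_add_mul_ediv (k * x) q'
  set Q := k * x / (q' : ℤ)
  -- `Gk = p (kx) + q (ky)`; reducing `kx` modulo `q'` costs a multiple of `p q' = p' q`
  have hid : (p : ℤ) * (a₀ + j * q') + q * (p + k * y - j * p' + p' * Q) = p * q + G * k := by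
    have hp'' : (p : ℤ) = G * p' := by exact_mod_cast hp'
    have hq'' : (q : ℤ) = G * q' := by exact_mod_cast hq'
    linear_combination (j * q' - q' * Q) * hp'' + (p' * Q - j * p') * hq'' + p * ha₀ +
      p * hdiv - k * hB
  have ha : a₀ + j * q' < q := by
    calc a₀ + j * q' < (j + 1) * q' := by linarith
      _ ≤ G * q' := Nat.mul_le_mul_right _ hj
      _ = q := hq'.symm
  obtain ⟨b, hb⟩ : ∃ b : ℕ, (b : ℤ) = p + k * y - j * p' + p' * Q := by
    refine ⟨_, Int.toNat_of_nonneg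
      (nonneg_of_mul_nonneg_right (a := (q : ℤ)) ?_ (by exact_mod_cast hq))⟩
    have : (p : ℤ) * (a₀ + j * q') ≤ p * q := by exact_mod_cast Nat.mul_le_mul_left p ha.le
    nlinarith
  refine ⟨a₀ + j * q', b, ha, ?_, ?_⟩
  · rw [hq', Nat.mul_div_cancel_left _ hG, Nat.add_mul_div_right _ _ hq'0,
      Nat.div_eq_of_lt ha₀q, zero_add]
  · rw [← hb] at hid
    exact_mod_cast hid

def weightLT (p q N : ℕ) : Finset (ℕ × ℕ) :=
  {v ∈ Finset.range N ×ˢ Finset.range N | p * v.1 + q * v.2 < N}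

section weightLT

variable {p q : ℕ} (hp : 0 < p) (hq : 0 < q)
include hp hq

theorem mem_weightLT {N : ℕ} {v : ℕ × ℕ} : v ∈ weightLT p q N ↔ p * v.1 + q * v.2 < N := by
  simp only [weightLT, Finset.mem_filter, Finset.mem_product, Finset.mem_range,
    and_iff_right_iff_imp]
  intro h
  constructor <;> nlinarith

theorem le_card_filter_weightLT (n : ℕ) :
    n ≤ {v ∈ weightLT p q (p * q + n) | v.1 < q ∧ p * q ≤ p * v.1 + q * v.2}.card := by
  calc n = (Finset.range n).card := (Finset.card_range n).symm
    _ ≤ _ := by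
      -- `t` is hit by the exponent of weight `p q + G (t / G)` with `a / (q / G) = t % G`
      refine Finset.card_le_card_of_surjOn
        (fun v : ℕ × ℕ => (p * v.1 + q * v.2 - p * q) + v.1 / (q / p.gcd q)) fun t ht => ?_
      have hG := Nat.gcd_pos_of_pos_left q hp
      obtain ⟨a, b, ha, haj, hab⟩ :=
        Nat.exists_mul_add_mul_eq_mul_add_gcd_mul hq (t / p.gcd q) (Nat.mod_lt t hG)
      have := Nat.div_add_mod t (p.gcd q)
      rw [Finset.coe_range, Set.mem_Iio] at ht
      refine ⟨(a, b), ?_, ?_⟩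
      · simp only [Finset.coe_filter, Set.mem_ofPred_eq, mem_weightLT hp hq]
        omega
      · simp only [haj]
        omega

theorem card_weightLT_add_le (n : ℕ) :
    (weightLT p q (p * q)).card + (weightLT p q n).card + n ≤
      (weightLT p q (p * q + n)).card := by
  set U := weightLT p q (p * q + n)
  have hshift : (weightLT p q n).card ≤ {v ∈ U | q ≤ v.1}.card := by
    refine Finset.card_le_card_of_injOn (fun v => (v.1 + q, v.2)) (fun v hv => ?_) ?_
    · simp only [Finset.coe_filter, Finset.mem_coe, Set.mem_ofPred_eq, mem_weightLT hp hq, U]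
        at hv ⊢
      rw [mul_add]
      omega
    · intro v _ v' _ h
      simp only [Prod.mk.injEq, Nat.add_right_cancel_iff] at h
      exact Prod.ext h.1 h.2
  have hlow : (weightLT p q (p * q)).card + n ≤ {v ∈ U | ¬q ≤ v.1}.card := by
    set C := {v ∈ U | v.1 < q ∧ p * q ≤ p * v.1 + q * v.2}
    have hdisj : Disjoint (weightLT p q (p * q)) C := by
      rw [Finset.disjoint_left]
      intro v hB hC
      rw [mem_weightLT hp hq] at hB
      rw [Finset.mem_filter] at hC
      omega
    have hsub : weightLT p q (p * q) ∪ C ⊆ {v ∈ U | ¬q ≤ v.1} := by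
      intro v hv
      simp only [Finset.mem_union, Finset.mem_filter, mem_weightLT hp hq, U, C] at hv ⊢
      rcases hv with hv | hv
      · refine ⟨by omega, fun hqv => ?_⟩
        nlinarith
      · omega
    calc _ ≤ (weightLT p q (p * q)).card + C.card :=
          Nat.add_le_add_left (le_card_filter_weightLT hp hq n) _
      _ = (weightLT p q (p * q) ∪ C).card := (Finset.card_union_of_disjoint hdisj).symm
      _ ≤ _ := Finset.card_le_card hsub
  have := Finset.card_filter_add_card_filter_not (s := U) (fun v => q ≤ v.1)
  omega

end weightLT

theorem weight_fin_two (p q : ℕ) (d : Fin 2 →₀ ℕ) : weight ![p, q] d = p * d 0 + q * d 1 := by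
  rw [weight_eq_sum, Fin.sum_univ_two]
  simp [mul_comm]

theorem ncard_weight_lt_eq_card_weightLT {p q : ℕ} (hp : 0 < p) (hq : 0 < q) (N : ℕ) :
    {d : Fin 2 →₀ ℕ | weight ![p, q] d < N}.ncard = (weightLT p q N).card := by
  let e : (Fin 2 →₀ ℕ) ≃ ℕ × ℕ := equivFunOnFinite.trans (finTwoArrowEquiv ℕ)
  rw [← Set.ncard_coe_finset, ← Set.ncard_image_of_injective _ e.injective]
  rw [e.image_eq_preimage_symm]
  congr 1
  ext v
  simp [e, mem_weightLT hp hq, weight_fin_two]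

theorem stmt15_general (p q : ℕ) (hp : 0 < p) (hq : 0 < q) (f : R2)
    (hord : ∀ d : Fin 2 →₀ ℕ, coeff d f ≠ 0 → p * q ≤ p * d 0 + q * d 1) :
    ∀ g : R2, g ≠ 0 → (wOrd p q g : ℕ∞) ≤ interNum f g := by
  intro g _
  set n := wOrd p q g
  have hw : ∀ i, ![p, q] i ≠ 0 := Fin.forall_fin_two.mpr ⟨hp.ne', hq.ne'⟩
  have hf : ((p * q : ℕ) : ℕ∞) ≤ f.weightedOrder ![p, q] :=
    le_weightedOrder _ fun d hd => by
      by_contra h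
      rw [Nat.cast_lt, weight_fin_two] at hd
      exact (hord d h).not_gt hd
  have hg : (n : ℕ∞) ≤ g.weightedOrder ![p, q] :=
    le_weightedOrder _ fun d hd => by
      by_contra h
      rw [Nat.cast_lt, weight_fin_two] at hd
      exact (Nat.sInf_le ⟨d, h, rfl⟩ : n ≤ _).not_gt hd
  have hrank := MvPowerSeries.ncard_weight_lt_add_le hw hf hg
  simp only [ncard_weight_lt_eq_card_weightLT hp hq] at hrank
  have hcount := card_weightLT_add_le hp hq n
  rw [interNum, edim, Cardinal.natCast_le_toENat,
    ← Cardinal.add_nat_le_add_nat_iff ((weightLT p q (p * q)).card + (weightLT p q n).card)]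
  exact le_trans (by exact_mod_cast (by omega : _ ≤ (weightLT p q (p * q + n)).card)) hrank

/-- If `f` is semi-quasihomogeneous w.r.t. `(p,q)` with
`ord_{(p,q)}(f) = pq` (i.e. its `(p,q)`-leading form is reduced), then for every
`0 ≠ g ∈ R` one has `i(f,g) ≥ ord_{(p,q)}(g)`. -/
theorem stmt15 (p q : ℕ) (hp : 0 < p) (hq : 0 < q) (f : R2)
    (hord : ∀ d : Fin 2 →₀ ℕ, coeff d f ≠ 0 → p * q ≤ p * d 0 + q * d 1)
    (hord' : ∃ d : Fin 2 →₀ ℕ, coeff d f ≠ 0 ∧ p * d 0 + q * d 1 = p * q)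
    (hsqf : Squarefree (leadForm p q f)) :
    ∀ g : R2, g ≠ 0 → (wOrd p q g : ℕ∞) ≤ interNum f g :=
  stmt15_general p q hp hq f hord
end
end

section
/- Let p, q be positive integers, let A, B, C ∈ ℕ, and let g, h ∈ R with L_{(p,q)}(g) = x^A y^B and L_{(p,q)}(h) = y^C. Put M := ⟨x^β y^γ : βp + γq ≥ pq⟩, J' := ⟨g, h⟩ + M and J := ⟨x^A y^B, y^C⟩ + M. Then dim_ℂ R/J' ≤ dim_ℂ R/J. If moreover Ap + Bq ≤ pq and B ≤ C ≤ p, then dim_ℂ R/J = Ap + Bq − AB − Σ_{i=1}^{A−1} ⌊p·i/q⌋ − Σ_{i=1}^{B−1} ⌊q·i/p⌋ − Σ_{i=C}^{p−1} min{A, ⌈q − q·i/p⌉}. Moreover, if B = 0 then dim_ℂ R/J ≤ A·C. -/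
open MvPowerSeries

noncomputable section

/-- `d₀` is the exponent of the leading monomial of `h` w.r.t. the local weighted degree
ordering `<_{(p,q)}`: `d₀` occurs in `h` and every other monomial occurring in `h` is
smaller, i.e. has bigger weighted degree, or equal weighted degree and smaller `y`-exponent. -/
def IsLeadMon (p q : ℕ) (h : R2) (d₀ : Fin 2 →₀ ℕ) : Prop :=
  coeff d₀ h ≠ 0 ∧ ∀ d : Fin 2 →₀ ℕ, coeff d h ≠ 0 → d = d₀ ∨
    p * d₀ 0 + q * d₀ 1 < p * d 0 + q * d 1 ∨
    (p * d 0 + q * d 1 = p * d₀ 0 + q * d₀ 1 ∧ d 1 < d₀ 1)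

/-! The monomials `x^i y^j` with `pi + qj < pq`, `j < C` and not `(i ≥ A ∧ j ≥ B)` span `R/J'`:
everything of weighted degree `≥ pq` lies in `M`, and a monomial divisible by the leading
monomial of `g` or `h` is congruent modulo `J'` to a combination of monomials that are smaller
for `<_{(p,q)}`; below weighted degree `pq` there are only finitely many of those, so this
reduction terminates. For `J` itself no element has a nonzero coefficient at these monomials,
so they form a basis of `R/J`, and the formula counts these lattice points by rows and columns. -/

section MonomialIdeals
variable {σ : Type*}

theorem MvPowerSeries.coeff_eq_zero_of_mem_span {K : Type*} [CommSemiring K]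
    {S : Set (σ →₀ ℕ)} (hS : IsUpperSet S)
    {s : Set (MvPowerSeries σ K)} (hs : ∀ φ ∈ s, ∀ d ∉ S, coeff d φ = 0)
    {f : MvPowerSeries σ K} (hf : f ∈ Ideal.span s) : ∀ d ∉ S, coeff d f = 0 := by
  classical
  induction hf using Submodule.span_induction with
  | mem φ hφ => exact hs φ hφ
  | zero => simp
  | add φ ψ _ _ hφ hψ => intro d hd; simp [hφ d hd, hψ d hd]
  | smul a φ _ hφ =>
    intro d hd
    rw [smul_eq_mul, coeff_mul]
    refine Finset.sum_eq_zero fun e he => ?_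
    have he2 : e.2 ≤ d := Finset.HasAntidiagonal.mem_antidiagonal.mp he ▸ le_add_self
    rw [hφ e.2 fun h => hd (hS he2 h), mul_zero]

theorem MvPowerSeries.mem_span_monomial_of_forall_exists_le {K : Type*} [CommRing K]
    (G : Finset (σ →₀ ℕ))
    {f : MvPowerSeries σ K} (hf : ∀ d, coeff d f ≠ 0 → ∃ g ∈ G, g ≤ d) :
    f ∈ Ideal.span ((monomial · 1) '' G) := by
  classical
  induction G using Finset.induction_on generalizing f with
  | empty =>
    convert Ideal.zero_mem _
    ext d
    by_contra h
    simpa using hf d h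
  | insert g G _ ih =>
    set f₁ : MvPowerSeries σ K := fun e => coeff (e + g) f
    have hsplit : f = monomial g 1 * f₁ + (f - monomial g 1 * f₁) := by ring
    have hmul : ∀ d, coeff d (monomial g 1 * f₁) = if g ≤ d then coeff d f else 0 := by
      intro d
      rw [coeff_monomial_mul]
      split_ifs with h
      · rw [one_mul]
        exact congrArg (coeff · f) (tsub_add_cancel_of_le h)
      · rfl
    rw [hsplit]
    refine Ideal.add_mem _ (Ideal.mul_mem_right _ _ (Ideal.subset_span ⟨g, by simp, rfl⟩)) ?_
    refine Ideal.span_mono (Set.image_mono (by simp)) (ih fun d hd => ?_)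
    rw [map_sub, hmul] at hd
    split_ifs at hd with h
    · simp at hd
    · obtain ⟨g', hg', hle⟩ := hf d (by simpa using hd)
      rcases Finset.mem_insert.mp hg' with rfl | hg'
      · exact absurd hle h
      · exact ⟨g', hg', hle⟩

end MonomialIdeals

section QuotientRank
universe u
variable {K M : Type u} [Field K] [AddCommGroup M] [Module K M]
open Cardinal

theorem rank_quotient_le_of_span_sup_eq_top {N : Submodule K M} {s : Set M}
    (hs : Submodule.span K s ⊔ N = ⊤) : Module.rank K (M ⧸ N) ≤ #s := by
  have htop : Submodule.span K (N.mkQ '' s) = ⊤ := by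
    rw [← Submodule.map_span, Submodule.map_mkQ_eq_top, sup_comm, hs]
  calc Module.rank K (M ⧸ N) = Module.rank K (Submodule.span K (N.mkQ '' s)) := by
        rw [htop, rank_top]
    _ ≤ #(N.mkQ '' s) := rank_span_le _
    _ ≤ #s := mk_image_le

theorem card_le_rank_quotient {ι : Type u} [Fintype ι] {N : Submodule K M} (Φ : M →ₗ[K] ι → K)
    (hΦ : Function.Surjective Φ) (hN : N ≤ LinearMap.ker Φ) :
    (Fintype.card ι : Cardinal) ≤ Module.rank K (M ⧸ N) := by
  rw [← rank_fun' (R := K)]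
  exact LinearMap.rank_le_of_surjective (N.liftQ Φ hN) (by
    intro v; obtain ⟨m, rfl⟩ := hΦ v; exact ⟨N.mkQ m, rfl⟩)

end QuotientRank

theorem Finset.card_filter_product_eq_sum_snd {α β : Type*} (s : Finset α) (t : Finset β)
    (P : α × β → Prop) [DecidablePred P] :
    ((s ×ˢ t).filter P).card = ∑ j ∈ t, (s.filter fun i => P (i, j)).card := by
  simp only [Finset.card_filter, Finset.sum_product_right]

theorem Finset.card_filter_product_eq_sum_fst {α β : Type*} (s : Finset α) (t : Finset β)
    (P : α × β → Prop) [DecidablePred P] :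
    ((s ×ˢ t).filter P).card = ∑ i ∈ s, (t.filter fun j => P (i, j)).card := by
  simp only [Finset.card_filter, Finset.sum_product]

theorem Finset.sum_tsub_add_sum {ι : Type*} {s : Finset ι} {c : ℕ} {g : ι → ℕ}
    (h : ∀ i ∈ s, g i ≤ c) : ∑ i ∈ s, (c - g i) + ∑ i ∈ s, g i = s.card * c := by
  rw [← Finset.sum_add_distrib, Finset.sum_congr rfl fun i hi => tsub_add_cancel_of_le (h i hi),
    Finset.sum_const, smul_eq_mul]

theorem Finset.sum_Ico_one_eq_sum_range {f : ℕ → ℕ} (hf : f 0 = 0) (n : ℕ) :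
    ∑ i ∈ Finset.Ico 1 n, f i = ∑ i ∈ Finset.range n, f i := by
  rcases Nat.eq_zero_or_pos n with rfl | hn
  · simp
  · rw [Finset.sum_range_eq_add_Ico f hn, hf, zero_add]

def wdeg (p q : ℕ) (d : Fin 2 →₀ ℕ) : ℕ := p * d 0 + q * d 1

/-- `x^d' <_{(p,q)} x^d`. -/
def LocalLT (p q : ℕ) (d' d : Fin 2 →₀ ℕ) : Prop :=
  wdeg p q d < wdeg p q d' ∨ (wdeg p q d' = wdeg p q d ∧ d' 1 < d 1)

def pairExp (i j : ℕ) : Fin 2 →₀ ℕ := Finsupp.single 0 i + Finsupp.single 1 j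

section Weights
variable {p q : ℕ}

@[simp] theorem pairExp_apply_zero (i j : ℕ) : pairExp i j 0 = i := by simp [pairExp]

@[simp] theorem pairExp_apply_one (i j : ℕ) : pairExp i j 1 = j := by simp [pairExp]

theorem pairExp_zero_left (j : ℕ) : pairExp 0 j = Finsupp.single 1 j := by simp [pairExp]

theorem pairExp_apply_self (d : Fin 2 →₀ ℕ) : pairExp (d 0) (d 1) = d := by
  ext k; fin_cases k <;> simp

theorem pairExp_injective : Function.Injective fun ij : ℕ × ℕ => pairExp ij.1 ij.2 :=
  fun a b h => Prod.ext (by simpa using congrArg (· 0) h) (by simpa using congrArg (· 1) h)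

theorem pairExp_le_iff {i j : ℕ} {d : Fin 2 →₀ ℕ} : pairExp i j ≤ d ↔ i ≤ d 0 ∧ j ≤ d 1 := by
  simp [Finsupp.le_def, Fin.forall_fin_two]

theorem monomial_pairExp (i j : ℕ) : (monomial (pairExp i j) 1 : R2) = X 0 ^ i * X 1 ^ j := by
  rw [X_pow_eq, X_pow_eq, monomial_mul_monomial, one_mul]; rfl

theorem wdeg_add (d e : Fin 2 →₀ ℕ) : wdeg p q (d + e) = wdeg p q d + wdeg p q e := by
  simp only [wdeg, Finsupp.add_apply]; ring

theorem wdeg_mono {d e : Fin 2 →₀ ℕ} (h : d ≤ e) : wdeg p q d ≤ wdeg p q e := by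
  obtain ⟨c, rfl⟩ := exists_add_of_le h
  simp [wdeg_add]

theorem wdeg_pairExp (i j : ℕ) : wdeg p q (pairExp i j) = p * i + q * j := by simp [wdeg]

theorem LocalLT.add_left {d' d : Fin 2 →₀ ℕ} (h : LocalLT p q d' d) (e : Fin 2 →₀ ℕ) :
    LocalLT p q (e + d') (e + d) := by
  simp only [LocalLT, wdeg_add, Finsupp.add_apply] at h ⊢
  omega

theorem LocalLT.induction_of_wdeg_lt {N : ℕ} {P : (Fin 2 →₀ ℕ) → Prop}
    (ind : ∀ d, wdeg p q d < N → (∀ d', wdeg p q d' < N → LocalLT p q d' d → P d') → P d)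
    (d : Fin 2 →₀ ℕ) (hd : wdeg p q d < N) : P d :=
  ind d hd fun d' hd' _ => LocalLT.induction_of_wdeg_lt ind d' hd'
termination_by (N - wdeg p q d, d 1)
decreasing_by
  rcases ‹LocalLT p q d' d› with h | ⟨h, h'⟩
  · exact Prod.Lex.left _ _ (by omega)
  · rw [h]; exact Prod.Lex.right _ h'

def latticeBelow (p q : ℕ) (s t : Finset ℕ) : Finset (ℕ × ℕ) :=
  (s ×ˢ t).filter fun ij => p * ij.1 + q * ij.2 < p * q

def lowExps (p q : ℕ) : Finset (Fin 2 →₀ ℕ) :=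
  (latticeBelow p q (Finset.range q) (Finset.range p)).image fun ij => pairExp ij.1 ij.2

theorem mem_lowExps {d : Fin 2 →₀ ℕ} :
    d ∈ lowExps p q ↔ wdeg p q d < p * q := by
  simp only [lowExps, latticeBelow, Finset.mem_image, Finset.mem_filter, Finset.mem_product,
    Finset.mem_range, Prod.exists]
  constructor
  · rintro ⟨i, j, ⟨-, hw⟩, rfl⟩
    rwa [wdeg_pairExp]
  · intro hd
    unfold wdeg at hd
    refine ⟨d 0, d 1, ⟨⟨?_, ?_⟩, hd⟩, pairExp_apply_self d⟩ <;> nlinarith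

theorem mem_wIdeal_of_coeff_eq_zero {f : R2} (hf : ∀ d, wdeg p q d < p * q → coeff d f = 0) :
    f ∈ wIdeal p q := by
  classical
  set m := pairExp q p
  refine Ideal.span_mono ?_ (mem_span_monomial_of_forall_exists_le
    ((Finset.Iic m).filter fun g => p * q ≤ wdeg p q g) fun d hd => ⟨d ⊓ m, ?_, inf_le_left⟩)
  · rintro _ ⟨g, hg, rfl⟩
    exact ⟨g 0, g 1, (Finset.mem_filter.1 hg).2, by rw [← monomial_pairExp, pairExp_apply_self]⟩
  · have hw := not_lt.1 (mt (hf d) hd)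
    rw [Finset.mem_filter, Finset.mem_Iic]
    refine ⟨inf_le_right, ?_⟩
    simp only [wdeg, Finsupp.inf_apply, m, pairExp_apply_zero, pairExp_apply_one] at hw ⊢
    rcases le_total (d 0) q with h0 | h0 <;> rcases le_total (d 1) p with h1 | h1 <;>
      simp only [inf_of_le_left, inf_of_le_right, h0, h1] <;> nlinarith

theorem monomial_eq_smul_monomial_one (d : Fin 2 →₀ ℕ) (a : ℂ) :
    (monomial d a : R2) = a • monomial d 1 := by
  rw [← map_smul, smul_eq_mul, mul_one]

theorem mem_of_monomial_mem_of_wdeg_lt {P : Submodule ℂ R2}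
    (hW : ∀ f ∈ wIdeal p q, f ∈ P) {f : R2}
    (hf : ∀ d, wdeg p q d < p * q → coeff d f ≠ 0 → monomial d 1 ∈ P) : f ∈ P := by
  classical
  set low := ∑ d ∈ lowExps p q, (monomial d (coeff d f) : R2)
  have hlow : low ∈ P := Submodule.sum_mem _ fun d hd => by
    by_cases h : coeff d f = 0
    · simp [h]
    · rw [monomial_eq_smul_monomial_one]
      exact P.smul_mem _ (hf d (mem_lowExps.1 hd) h)
  have hhigh : f - low ∈ P := hW _ (mem_wIdeal_of_coeff_eq_zero fun d hd => by
    simp [low, map_sum, coeff_monomial, mem_lowExps.2 hd])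
  simpa using P.add_mem hlow hhigh

theorem IsLeadMon.monomial_mul {h : R2} {d₀ : Fin 2 →₀ ℕ} (hh : IsLeadMon p q h d₀)
    (e : Fin 2 →₀ ℕ) : IsLeadMon p q (monomial e 1 * h) (e + d₀) := by
  obtain ⟨hc, hlt⟩ := hh
  refine ⟨by simpa [coeff_monomial_mul] using hc, fun d hd => ?_⟩
  rw [coeff_monomial_mul] at hd
  split_ifs at hd with hed
  · obtain ⟨d', rfl⟩ := exists_add_of_le hed
    rw [one_mul, add_tsub_cancel_left] at hd
    rcases hlt d' hd with rfl | h
    · exact Or.inl rfl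
    · exact Or.inr (LocalLT.add_left h e)
  · exact absurd rfl hd

theorem isLeadMon_monomial (d : Fin 2 →₀ ℕ) : IsLeadMon p q (monomial d 1) d := by
  classical
  refine ⟨by simp, fun d' hd' => Or.inl ?_⟩
  by_contra h
  simp [coeff_monomial, h] at hd'

theorem monomial_mem_of_isLeadMon {P : Submodule ℂ R2}
    (hW : ∀ f ∈ wIdeal p q, f ∈ P) {u : R2} (hu : u ∈ P) {d : Fin 2 →₀ ℕ}
    (hlead : IsLeadMon p q u d)
    (ih : ∀ d', wdeg p q d' < p * q → LocalLT p q d' d → monomial d' 1 ∈ P) :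
    monomial d 1 ∈ P := by
  classical
  obtain ⟨hc, hlt⟩ := hlead
  have hrest : u - monomial d (coeff d u) ∈ P :=
    mem_of_monomial_mem_of_wdeg_lt hW fun d' hd' hne => by
      have hd'd : d' ≠ d := by rintro rfl; simp at hne
      rw [map_sub, coeff_monomial, if_neg hd'd, sub_zero] at hne
      exact ih d' hd' ((hlt d' hne).resolve_left hd'd)
  have hmon : monomial d (coeff d u) ∈ P := by simpa using P.sub_mem hu hrest
  rw [monomial_eq_smul_monomial_one] at hmon
  simpa [hc] using P.smul_mem (coeff d u)⁻¹ hmon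

theorem span_monomial_sup_eq_top {J : Ideal R2}
    (hW : wIdeal p q ≤ J) (T : Set (Fin 2 →₀ ℕ))
    (hT : ∀ d, wdeg p q d < p * q → d ∉ T → ∃ f ∈ J, ∃ d₀ ≤ d, IsLeadMon p q f d₀) :
    Submodule.span ℂ ((monomial · 1) '' T) ⊔ J.restrictScalars ℂ = ⊤ := by
  set P := Submodule.span ℂ ((monomial · 1) '' T) ⊔ J.restrictScalars ℂ
  have hJ : ∀ f ∈ J, f ∈ P := fun f hf => Submodule.mem_sup_right hf
  have hWP : ∀ f ∈ wIdeal p q, f ∈ P := fun f hf => hJ f (hW hf)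
  have hmon : ∀ d, wdeg p q d < p * q → monomial d 1 ∈ P :=
    LocalLT.induction_of_wdeg_lt fun d hd ih => by
      by_cases hdT : d ∈ T
      · exact Submodule.mem_sup_left (Submodule.subset_span ⟨d, hdT, rfl⟩)
      · obtain ⟨f, hf, d₀, hle, hlead⟩ := hT d hd hdT
        obtain ⟨e, rfl⟩ := exists_add_of_le hle
        rw [add_comm] at ih ⊢
        exact monomial_mem_of_isLeadMon hWP (hJ _ (J.mul_mem_left (monomial e 1) hf))
          (hlead.monomial_mul e) ih
  exact eq_top_iff.2 fun f _ =>
    mem_of_monomial_mem_of_wdeg_lt hWP fun d hd _ => hmon d hd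

end Weights

section Dimension
open Cardinal

theorem edim_le_card {I : Ideal R2} {T : Finset (Fin 2 →₀ ℕ)}
    (hT : Submodule.span ℂ ((monomial · 1) '' (T : Set (Fin 2 →₀ ℕ))) ⊔ I.restrictScalars ℂ = ⊤) :
    edim I ≤ T.card := by
  rw [edim, toENat_le_natCast, ← (Submodule.Quotient.restrictScalarsEquiv ℂ I).rank_eq]
  calc _ ≤ #((monomial · 1) '' (T : Set (Fin 2 →₀ ℕ))) := rank_quotient_le_of_span_sup_eq_top hT
    _ ≤ #T := mk_image_le
    _ = T.card := mk_coe_finset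

theorem card_le_edim {I : Ideal R2} {T : Finset (Fin 2 →₀ ℕ)}
    (hT : ∀ f ∈ I, ∀ d ∈ T, coeff d f = 0) : (T.card : ℕ∞) ≤ edim I := by
  classical
  rw [edim, natCast_le_toENat, ← (Submodule.Quotient.restrictScalarsEquiv ℂ I).rank_eq,
    ← Fintype.card_coe]
  refine card_le_rank_quotient (LinearMap.pi fun d : T => coeff (d : Fin 2 →₀ ℕ))
    (fun v => ⟨fun e => if h : e ∈ T then v ⟨e, h⟩ else 0, ?_⟩) fun f hf => ?_
  · funext d
    exact dif_pos d.2
  · funext d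
    exact hT f hf d d.2

end Dimension

section StandardMonomials
variable (p q A B C : ℕ)

def stdPairs : Finset (ℕ × ℕ) :=
  (latticeBelow p q (Finset.range q) (Finset.range p)).filter fun ij =>
    ¬(A ≤ ij.1 ∧ B ≤ ij.2) ∧ ij.2 < C

def stdExps : Finset (Fin 2 →₀ ℕ) :=
  (lowExps p q).filter fun d => ¬(A ≤ d 0 ∧ B ≤ d 1) ∧ d 1 < C

theorem card_stdExps : (stdExps p q A B C).card = (stdPairs p q A B C).card := by
  rw [stdExps, lowExps, Finset.filter_image, Finset.card_image_of_injective _ pairExp_injective]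
  simp only [stdPairs, pairExp_apply_zero, pairExp_apply_one]

variable {p q A B C}

theorem edim_span_sup_wIdeal_le {g h : R2} (hg : IsLeadMon p q g (pairExp A B))
    (hh : IsLeadMon p q h (pairExp 0 C)) :
    edim (Ideal.span {g, h} ⊔ wIdeal p q) ≤ (stdPairs p q A B C).card := by
  rw [← card_stdExps]
  refine edim_le_card (span_monomial_sup_eq_top le_sup_right _ fun d hd hdT => ?_)
  have hdT' : (A ≤ d 0 ∧ B ≤ d 1) ∨ C ≤ d 1 := by
    simp only [stdExps, Finset.coe_filter, mem_lowExps, Set.mem_ofPred_eq, hd, true_and] at hdT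
    omega
  rcases hdT' with hAB | hC
  · exact ⟨g, Ideal.mem_sup_left (Ideal.subset_span (by simp)), _, pairExp_le_iff.2 hAB, hg⟩
  · exact ⟨h, Ideal.mem_sup_left (Ideal.subset_span (by simp)), _,
      pairExp_le_iff.2 ⟨Nat.zero_le _, hC⟩, hh⟩

theorem card_le_edim_monomialIdeal :
    ((stdPairs p q A B C).card : ℕ∞) ≤
      edim (Ideal.span {X 0 ^ A * X 1 ^ B, X 1 ^ C} ⊔ wIdeal p q) := by
  set S : Set (Fin 2 →₀ ℕ) := {d | (A ≤ d 0 ∧ B ≤ d 1) ∨ C ≤ d 1 ∨ p * q ≤ wdeg p q d}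
  have hS : IsUpperSet S := fun a b hab ha => by
    have h0 := Finsupp.le_def.1 hab 0
    have h1 := Finsupp.le_def.1 hab 1
    have hw := wdeg_mono (p := p) (q := q) hab
    simp only [S, Set.mem_ofPred_eq] at ha ⊢
    omega
  have hmon : ∀ i j, pairExp i j ∈ S → ∀ d ∉ S, coeff d (X 0 ^ i * X 1 ^ j : R2) = 0 :=
    fun i j hij d hd => by
      rw [← monomial_pairExp, coeff_monomial_ne (by rintro rfl; exact hd hij)]
  rw [← card_stdExps]
  refine card_le_edim fun f hf d hd => ?_
  rw [wIdeal, ← Ideal.span_union] at hf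
  refine coeff_eq_zero_of_mem_span hS ?_ hf d ?_
  · rintro φ ((rfl | rfl) | ⟨β, γ, hw, rfl⟩)
    · exact hmon A B (Or.inl (by simp))
    · simpa using hmon 0 C (Or.inr (Or.inl (by simp)))
    · exact hmon β γ (Or.inr (Or.inr (by rwa [wdeg_pairExp])))
  · simp only [stdExps, Finset.mem_filter, mem_lowExps] at hd
    simp only [S, Set.mem_ofPred_eq]
    omega

theorem edim_monomialIdeal :
    edim (Ideal.span {X 0 ^ A * X 1 ^ B, X 1 ^ C} ⊔ wIdeal p q) = (stdPairs p q A B C).card := by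
  refine le_antisymm ?_ card_le_edim_monomialIdeal
  have hC : (monomial (pairExp 0 C) 1 : R2) = X 1 ^ C := by simp [monomial_pairExp]
  rw [← monomial_pairExp, ← hC]
  exact edim_span_sup_wIdeal_le (isLeadMon_monomial _) (isLeadMon_monomial _)

end StandardMonomials

section Counting
variable {p q : ℕ}

theorem lt_sub_mul_div_iff (hp : 0 < p) (i j : ℕ) : i < q - q * j / p ↔ p * i + q * j < p * q := by
  rw [Nat.lt_sub_iff_add_lt', ← Nat.add_mul_div_left _ _ hp, Nat.div_lt_iff_lt_mul hp,
    Nat.mul_comm q p, Nat.add_comm]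

theorem card_latticeBelow_eq_sum_rows (hp : 0 < p) (a : ℕ) (t : Finset ℕ) :
    (latticeBelow p q (Finset.range a) t).card = ∑ j ∈ t, min a (q - q * j / p) := by
  rw [latticeBelow, Finset.card_filter_product_eq_sum_snd]
  refine Finset.sum_congr rfl fun j _ => ?_
  rw [← Finset.card_range (min a _)]
  congr 1
  ext i
  simp only [Finset.mem_filter, Finset.mem_range, ← lt_sub_mul_div_iff hp]
  omega

theorem card_latticeBelow_eq_sum_cols (hq : 0 < q) (s : Finset ℕ) (b : ℕ) :
    (latticeBelow p q s (Finset.Ico b p)).card = ∑ i ∈ s, (p - p * i / q - b) := by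
  rw [latticeBelow, Finset.card_filter_product_eq_sum_fst]
  refine Finset.sum_congr rfl fun i _ => ?_
  rw [← Nat.card_Ico b]
  congr 1
  ext j
  have hiff := lt_sub_mul_div_iff (q := p) hq j i
  rw [Nat.mul_comm q p, Nat.add_comm] at hiff
  have hle : p - p * i / q ≤ p := Nat.sub_le _ _
  simp only [Finset.mem_filter, Finset.mem_Ico]
  omega

variable {A B C : ℕ}

theorem card_stdPairs_add_card_latticeBelow (hAq : A ≤ q) (hBC : B ≤ C) (hBp : B ≤ p) :
    (stdPairs p q A B C).card + (latticeBelow p q (Finset.range A) (Finset.Ico C p)).card =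
      (latticeBelow p q (Finset.range q) (Finset.range B)).card +
        (latticeBelow p q (Finset.range A) (Finset.Ico B p)).card := by
  rw [← Finset.card_union_of_disjoint, ← Finset.card_union_of_disjoint]
  · congr 1
    ext ⟨i, j⟩
    simp only [stdPairs, latticeBelow, Finset.mem_union, Finset.mem_filter,
      Finset.mem_product, Finset.mem_range, Finset.mem_Ico]
    omega
  all_goals
    refine Finset.disjoint_left.2 fun ⟨i, j⟩ h h' => ?_
    simp only [stdPairs, latticeBelow, Finset.mem_filter, Finset.mem_product,
      Finset.mem_range, Finset.mem_Ico] at h h'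
    omega

theorem card_latticeBelow_range_add_sum (hp : 0 < p) (hBp : B ≤ p) :
    (latticeBelow p q (Finset.range q) (Finset.range B)).card +
      ∑ j ∈ Finset.range B, q * j / p = B * q := by
  rw [card_latticeBelow_eq_sum_rows hp]
  simp only [min_eq_right tsub_le_self]
  rw [Finset.sum_tsub_add_sum, Finset.card_range]
  intro j hj
  exact Nat.div_le_of_le_mul (Nat.mul_comm p q ▸ Nat.mul_le_mul_left q (by simp at hj; omega))

theorem card_latticeBelow_Ico_add_sum (hp : 0 < p) (hq : 0 < q) (h : A * p + B * q ≤ p * q) :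
    (latticeBelow p q (Finset.range A) (Finset.Ico B p)).card +
      ∑ i ∈ Finset.range A, p * i / q + A * B = A * p := by
  have hBp : B ≤ p := by nlinarith
  obtain ⟨k, rfl⟩ := Nat.exists_eq_add_of_le hBp
  rw [card_latticeBelow_eq_sum_cols hq]
  simp only [Nat.sub_right_comm _ _ B, Nat.add_sub_cancel_left]
  rw [Finset.sum_tsub_add_sum, Finset.card_range]
  · ring
  intro i hi
  simp only [Finset.mem_range] at hi
  exact Nat.div_le_of_le_mul (by nlinarith)

theorem card_stdPairs (hp : 0 < p) (hq : 0 < q) (h : A * p + B * q ≤ p * q) (hBC : B ≤ C) :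
    (stdPairs p q A B C).card = A * p + B * q - A * B - (∑ i ∈ Finset.Ico 1 A, p * i / q)
      - (∑ i ∈ Finset.Ico 1 B, q * i / p) - (∑ i ∈ Finset.Ico C p, min A (q - q * i / p)) := by
  have hAq : A ≤ q := by nlinarith
  have hBp : B ≤ p := by nlinarith
  have hsplit := card_stdPairs_add_card_latticeBelow (p := p) hAq hBC hBp
  have hbelow := card_latticeBelow_range_add_sum (q := q) hp hBp
  have hright := card_latticeBelow_Ico_add_sum hp hq h
  rw [card_latticeBelow_eq_sum_rows hp] at hsplit
  rw [Finset.sum_Ico_one_eq_sum_range (by simp), Finset.sum_Ico_one_eq_sum_range (by simp)]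
  omega

theorem card_stdPairs_zero_le : (stdPairs p q A 0 C).card ≤ A * C := by
  calc (stdPairs p q A 0 C).card ≤ (Finset.range A ×ˢ Finset.range C).card := by
        refine Finset.card_le_card fun ⟨i, j⟩ h => ?_
        simp only [stdPairs, latticeBelow, Finset.mem_filter, Finset.mem_product,
          Finset.mem_range] at h ⊢
        omega
    _ = A * C := by simp

end Counting

/-- Let `g, h ∈ R` with `L_{(p,q)}(g) = x^A y^B`, `L_{(p,q)}(h) = y^C`,
`M = ⟨x^β y^γ : βp + γq ≥ pq⟩`, `J' = ⟨g,h⟩ + M` and `J = ⟨x^A y^B, y^C⟩ + M`. Then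
`dim_ℂ R/J' ≤ dim_ℂ R/J`; if `Ap + Bq ≤ pq` and `B ≤ C ≤ p`, then `dim_ℂ R/J` equals
`Ap + Bq − AB − Σ_{i=1}^{A−1}⌊pi/q⌋ − Σ_{i=1}^{B−1}⌊qi/p⌋ − Σ_{i=C}^{p−1} min{A, ⌈q − qi/p⌉}`;
and if `B = 0`, then `dim_ℂ R/J ≤ A·C`. -/
theorem stmt17 (p q : ℕ) (hp : 0 < p) (hq : 0 < q) (A B C : ℕ) (g h : R2)
    (hg : IsLeadMon p q g (Finsupp.single 0 A + Finsupp.single 1 B))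
    (hh : IsLeadMon p q h (Finsupp.single 1 C)) :
    edim (Ideal.span {g, h} ⊔ wIdeal p q) ≤
      edim (Ideal.span {X 0 ^ A * X 1 ^ B, X 1 ^ C} ⊔ wIdeal p q) ∧
    (A * p + B * q ≤ p * q → B ≤ C → C ≤ p →
      edim (Ideal.span {X 0 ^ A * X 1 ^ B, X 1 ^ C} ⊔ wIdeal p q) =
        ((A * p + B * q - A * B - (∑ i ∈ Finset.Ico 1 A, p * i / q)
          - (∑ i ∈ Finset.Ico 1 B, q * i / p)
          - (∑ i ∈ Finset.Ico C p, min A (q - q * i / p)) : ℕ) : ℕ∞)) ∧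
    (B = 0 →
      edim (Ideal.span {X 0 ^ A * X 1 ^ B, X 1 ^ C} ⊔ wIdeal p q) ≤ ((A * C : ℕ) : ℕ∞)) := by
  rw [edim_monomialIdeal]
  refine ⟨edim_span_sup_wIdeal_le hg (by rwa [pairExp_zero_left]), fun hABpq hBC _ => ?_,
    fun hB => ?_⟩
  · rw [card_stdPairs hp hq hABpq hBC]
  · subst hB
    exact_mod_cast card_stdPairs_zero_le
end
end
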